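/- (Proposition 5.6, explicit start of the iteration in the multiplicative-noise case) Let L > 0, set m_L = √3·L^{5/4}e^{(5/2)L^{1/4}} and M₀(t) = e^{4Lt+2L}, and define v₀(t,x) = (m_L e^{2Lt+L}/(2π)^{3/2})·(sin x₃, 0, 0), Ξ₀(t,x) = (m_L e^{2Lt+L}/(2π)³)·(sin x₃, cos x₃, 0), M_v(t,x) = (m_L(2L + 1/2)e^{2Lt+L}/(2π)^{3/2})·M(x₃) with M(x₃) having (1,3) and (3,1) entries −cos x₃ and all other entries 0, and M_Ξ(t,x) = (m_L(2L + 1/2)e^{2Lt+L}/(2π)³)·N(x₃) with N(x₃) having rows (0, 0, −cos x₃), (0, 0, sin x₃), (cos x₃, −sin x₃, 0). Then: (i) for every t, v₀(t,·) and Ξ₀(t,·) are divergence-free and mean-zero on 𝕋³ with ‖v₀(t,·)‖_{L²(𝕋³)} = m_L M₀(t)^{1/2}/√2 and ‖Ξ₀(t,·)‖_{L²(𝕋³)} = m_L M₀(t)^{1/2}/(2π)^{3/2}; (ii) M_v is symmetric and trace-free and M_Ξ is skew-symmetric at every (t,x); (iii) for any functions Υ₁, Υ₂ : ℝ → ℝ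 with Υ₁ nowhere zero, ∂_t v₀ + (1/2)v₀ + div(Υ₁(t)·(v₀ ⊗ v₀) − Υ₁(t)⁻¹Υ₂(t)²·(Ξ₀ ⊗ Ξ₀)) = div M_v and ∂_t Ξ₀ + (1/2)Ξ₀ + Υ₁(t)·div(v₀ ⊗ Ξ₀ − Ξ₀ ⊗ v₀) = div M_Ξ everywhere. -/

import Mathlib

/-!
All four fields are shear flows: they depend on `x` only through `x₃` and their third
components vanish. Hence every product `u ⊗ w` of them has zero third column, so its divergence
vanishes, while the divergence of `M_v` and `M_Ξ` is the `x₃`-derivative of their third column,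
namely `(2L + 1/2) v₀` and `(2L + 1/2) Ξ₀`. The time dependence is the factor `e^{2Lt}`, so
`∂_t + 1/2` acts on `v₀` and `Ξ₀` as multiplication by the same `2L + 1/2`. Means and `L²` norms
reduce, by Fubini, to integrals of `sin`, `cos` and `sin²` over one period.
-/

open MeasureTheory
open scoped Matrix

/-- The fundamental domain `[−π, π]³` of the torus `𝕋³`. -/
def cube : Set (Fin 3 → ℝ) := {x | ∀ i, x i ∈ Set.Icc (-Real.pi) Real.pi}

/-- Outer product of two vectors in ℝ³: `(u ⊗ w)ᵢⱼ = uᵢ wⱼ`. -/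
def outer (u w : Fin 3 → ℝ) : Matrix (Fin 3) (Fin 3) ℝ := fun i j => u i * w j

/-- Divergence of a matrix-valued field: `(div M)ᵢ = ∑ⱼ ∂ⱼ Mᵢⱼ`. -/
noncomputable def divMat (M : (Fin 3 → ℝ) → Matrix (Fin 3) (Fin 3) ℝ)
    (x : Fin 3 → ℝ) (i : Fin 3) : ℝ :=
  ∑ j, fderiv ℝ (fun y => M y i j) x (Pi.single j 1)

/-- `m_L = √3·L^{5/4}·e^{(5/2)L^{1/4}}`. -/
noncomputable def mL (L : ℝ) : ℝ :=
  Real.sqrt 3 * L ^ ((5 : ℝ) / 4) * Real.exp (5 / 2 * L ^ ((1 : ℝ) / 4))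

/-- `M₀(t) = e^{4Lt + 2L}`. -/
noncomputable def M0 (L t : ℝ) : ℝ := Real.exp (4 * L * t + 2 * L)

/-- `v₀(t,x) = (m_L e^{2Lt+L}/(2π)^{3/2})·(sin x₃, 0, 0)`. -/
noncomputable def v0 (L t : ℝ) (x : Fin 3 → ℝ) : Fin 3 → ℝ :=
  ![mL L * Real.exp (2 * L * t + L) / (2 * Real.pi) ^ ((3 : ℝ) / 2) * Real.sin (x 2), 0, 0]

/-- `Ξ₀(t,x) = (m_L e^{2Lt+L}/(2π)³)·(sin x₃, cos x₃, 0)`. -/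
noncomputable def Xi0 (L t : ℝ) (x : Fin 3 → ℝ) : Fin 3 → ℝ :=
  ![mL L * Real.exp (2 * L * t + L) / (2 * Real.pi) ^ (3 : ℕ) * Real.sin (x 2),
    mL L * Real.exp (2 * L * t + L) / (2 * Real.pi) ^ (3 : ℕ) * Real.cos (x 2), 0]

/-- `M_v(t,x) = (m_L(2L + 1/2)e^{2Lt+L}/(2π)^{3/2})·M(x₃)` with
`M(x₃)₁₃ = M(x₃)₃₁ = −cos x₃`, other entries 0. -/
noncomputable def Mv (L t : ℝ) (x : Fin 3 → ℝ) : Matrix (Fin 3) (Fin 3) ℝ :=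
  (mL L * (2 * L + 1 / 2) * Real.exp (2 * L * t + L) / (2 * Real.pi) ^ ((3 : ℝ) / 2)) •
    !![0, 0, -Real.cos (x 2); 0, 0, 0; -Real.cos (x 2), 0, 0]

/-- `M_Ξ(t,x) = (m_L(2L + 1/2)e^{2Lt+L}/(2π)³)·N(x₃)` with `N(x₃)` having rows
`(0, 0, −cos x₃)`, `(0, 0, sin x₃)`, `(cos x₃, −sin x₃, 0)`. -/
noncomputable def MXi (L t : ℝ) (x : Fin 3 → ℝ) : Matrix (Fin 3) (Fin 3) ℝ :=
  (mL L * (2 * L + 1 / 2) * Real.exp (2 * L * t + L) / (2 * Real.pi) ^ (3 : ℕ)) •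
    !![0, 0, -Real.cos (x 2); 0, 0, Real.sin (x 2); Real.cos (x 2), -Real.sin (x 2), 0]

section FieldsOfOneCoordinate

variable {ι : Type*} [Fintype ι] [DecidableEq ι]

theorem fderiv_comp_apply_single (g : ℝ → ℝ) (x : ι → ℝ) (k j : ι) :
    fderiv ℝ (fun y : ι → ℝ => g (y k)) x (Pi.single j 1) =
      if j = k then deriv g (x k) else 0 := by
  by_cases hg : DifferentiableAt ℝ g (x k)
  · have hk : HasFDerivAt (fun y : ι → ℝ => y k)
        (ContinuousLinearMap.proj (R := ℝ) (φ := fun _ : ι => ℝ) k) x :=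
      hasFDerivAt_apply (𝕜 := ℝ) k x
    have h : HasFDerivAt (fun y : ι → ℝ => g (y k)) _ x := hg.hasDerivAt.hasFDerivAt.comp x hk
    rw [h.fderiv]
    by_cases hjk : j = k
    · subst hjk; simp
    · simp [hjk, Ne.symm hjk]
  · -- `g` is recovered from `y ↦ g (y k)` by composing with `z ↦ update x k z`.
    have hcomp : ¬ DifferentiableAt ℝ (fun y : ι → ℝ => g (y k)) x := by
      intro h
      have hu := (hasFDerivAt_update (𝕜 := ℝ) x (i := k) (x k)).differentiableAt
      have hgu : g = (fun y : ι → ℝ => g (y k)) ∘ Function.update x k := by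
        funext z; simp
      apply hg
      rw [hgu]
      exact DifferentiableAt.comp (x k) (by rwa [Function.update_eq_self]) hu
    simp [fderiv_zero_of_not_differentiableAt hcomp, deriv_zero_of_not_differentiableAt hg]

theorem sum_fderiv_comp_apply_single (V : ℝ → ι → ℝ) (x : ι → ℝ) (k : ι) :
    ∑ i, fderiv ℝ (fun y : ι → ℝ => V (y k) i) x (Pi.single i 1) =
      deriv (fun z => V z k) (x k) := by
  rw [Finset.sum_eq_single k (fun i _ hik => by
    simpa [hik] using fderiv_comp_apply_single (fun z => V z i) x k i) (by simp)]
  simpa using fderiv_comp_apply_single (fun z => V z k) x k k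

end FieldsOfOneCoordinate

theorem divMat_comp_apply (N : ℝ → Matrix (Fin 3) (Fin 3) ℝ) (x : Fin 3 → ℝ) (k i : Fin 3) :
    divMat (fun y => N (y k)) x i = deriv (fun z => N z i k) (x k) :=
  sum_fderiv_comp_apply_single (fun z j => N z i j) x k

theorem divMat_comp_apply_eq_zero (N : ℝ → Matrix (Fin 3) (Fin 3) ℝ) (k : Fin 3)
    (hN : ∀ z i, N z i k = 0) (x : Fin 3 → ℝ) (i : Fin 3) :
    divMat (fun y => N (y k)) x i = 0 := by
  simp [divMat_comp_apply, hN]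

theorem setIntegral_cube_comp_apply (g : ℝ → ℝ) (k : Fin 3) :
    ∫ x in cube, g (x k) = (2 * Real.pi) ^ 2 * ∫ z in -Real.pi..Real.pi, g z := by
  have hcube : cube = Set.univ.pi fun _ => Set.Icc (-Real.pi) Real.pi := by
    ext x; simp only [cube, Set.mem_ofPred_eq, Set.mem_pi, Set.mem_univ, true_implies]
  have hprod : (fun x : Fin 3 → ℝ => g (x k)) =
      fun x => ∏ i, Function.update (fun _ _ => (1 : ℝ)) k g i (x i) := by
    funext x
    rw [Finset.prod_eq_single k (fun i _ hi => by simp [hi]) (by simp)]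
    simp
  rw [hcube, volume_pi, Measure.restrict_pi_pi, hprod, integral_fintype_prod_eq_prod,
    ← Finset.mul_prod_erase _ _ (Finset.mem_univ k),
    Finset.prod_congr rfl (g := fun _ => 2 * Real.pi) (fun i hi => by
      simp only [Function.update_of_ne (Finset.ne_of_mem_erase hi), integral_const,
        MeasurableSet.univ, measureReal_restrict_apply, Set.univ_inter, Real.volume_real_Icc,
        sub_neg_eq_add, nonneg_add_self_iff, Real.pi_pos.le, sup_of_le_left, smul_eq_mul, mul_one]
      ring),
    intervalIntegral.integral_of_le (by linarith [Real.pi_pos]), ← integral_Icc_eq_integral_Ioc]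
  simp only [Function.update_self, Finset.prod_const, Finset.card_erase_of_mem (Finset.mem_univ k),
    Finset.card_univ, Fintype.card_fin]
  ring

theorem sqrt_two_pi_pow_three : Real.sqrt ((2 * Real.pi) ^ 3) = (2 * Real.pi) ^ ((3 : ℝ) / 2) := by
  rw [Real.sqrt_eq_rpow, ← Real.rpow_natCast, ← Real.rpow_mul (by positivity)]
  norm_num

theorem mL_nonneg {L : ℝ} (hL : 0 ≤ L) : 0 ≤ mL L := by
  unfold mL
  positivity

theorem sqrt_M0 (L t : ℝ) : Real.sqrt (M0 L t) = Real.exp (2 * L * t + L) := by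
  rw [M0, show 4 * L * t + 2 * L = (2 * L * t + L) + (2 * L * t + L) by ring, Real.exp_add,
    Real.sqrt_mul_self (Real.exp_pos _).le]

theorem deriv_exp_two_mul_add (L t : ℝ) :
    deriv (fun s => Real.exp (2 * L * s + L)) t = 2 * L * Real.exp (2 * L * t + L) := by
  have h : HasDerivAt (fun s => Real.exp (2 * L * s + L)) _ t :=
    (((hasDerivAt_id' t).const_mul (2 * L)).add_const L).exp
  rw [h.deriv]
  ring

section InitialData

variable (L t : ℝ) (x : Fin 3 → ℝ) (i : Fin 3)

-- Each field `F` below reads `y` only through `y 2`, so `F y` is definitionally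
-- `(fun z => F fun _ => z) (y 2)`; this is how the lemmas on fields of one coordinate apply.

theorem deriv_v0 : deriv (fun s => v0 L s x i) t = 2 * L * v0 L t x i := by
  fin_cases i
  · simp [v0, deriv_exp_two_mul_add]
    ring
  all_goals simp [v0]

theorem deriv_Xi0 : deriv (fun s => Xi0 L s x i) t = 2 * L * Xi0 L t x i := by
  fin_cases i <;> simp [Xi0, deriv_exp_two_mul_add] <;> ring

theorem sum_fderiv_v0 : ∑ i, fderiv ℝ (fun y => v0 L t y i) x (Pi.single i 1) = 0 := by
  refine (sum_fderiv_comp_apply_single (fun z => v0 L t fun _ => z) x 2).trans ?_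
  simp [v0]

theorem sum_fderiv_Xi0 : ∑ i, fderiv ℝ (fun y => Xi0 L t y i) x (Pi.single i 1) = 0 := by
  refine (sum_fderiv_comp_apply_single (fun z => Xi0 L t fun _ => z) x 2).trans ?_
  simp [Xi0]

theorem setIntegral_v0 : ∫ x in cube, v0 L t x i = 0 := by
  refine (setIntegral_cube_comp_apply (fun z => v0 L t (fun _ => z) i) 2).trans ?_
  fin_cases i <;> simp [v0]

theorem setIntegral_Xi0 : ∫ x in cube, Xi0 L t x i = 0 := by
  refine (setIntegral_cube_comp_apply (fun z => Xi0 L t (fun _ => z) i) 2).trans ?_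
  fin_cases i <;> simp [Xi0]

theorem setIntegral_sum_sq_v0 :
    ∫ x in cube, ∑ i, v0 L t x i ^ 2 = (mL L * Real.exp (2 * L * t + L)) ^ 2 / 2 := by
  refine (setIntegral_cube_comp_apply (fun z => ∑ i, v0 L t (fun _ => z) i ^ 2) 2).trans ?_
  have hP : ((2 * Real.pi) ^ ((3 : ℝ) / 2)) ^ 2 = (2 * Real.pi) ^ 3 := by
    rw [← sqrt_two_pi_pow_three, Real.sq_sqrt (by positivity)]
  simp only [mul_pow, v0, Fin.sum_univ_three, Fin.isValue, Matrix.cons_val_zero, div_pow, hP,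
    Matrix.cons_val_one, ne_eq, OfNat.ofNat_ne_zero, not_false_eq_true, zero_pow, add_zero,
    Matrix.cons_val, intervalIntegral.integral_const_mul, integral_sin_sq, Real.sin_neg,
    Real.sin_pi, neg_zero, Real.cos_neg, Real.cos_pi, mul_neg, mul_one, sub_self, zero_add,
    sub_neg_eq_add, add_self_div_two]
  field_simp

theorem setIntegral_sum_sq_Xi0 :
    ∫ x in cube, ∑ i, Xi0 L t x i ^ 2 =
      (mL L * Real.exp (2 * L * t + L)) ^ 2 / (2 * Real.pi) ^ 3 := by
  refine (setIntegral_cube_comp_apply (fun z => ∑ i, Xi0 L t (fun _ => z) i ^ 2) 2).trans ?_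
  have hsq (z : ℝ) : ∑ i, Xi0 L t (fun _ => z) i ^ 2 =
      (mL L * Real.exp (2 * L * t + L) / (2 * Real.pi) ^ 3) ^ 2 := by
    simp only [Xi0, Fin.sum_univ_three, Fin.isValue, Matrix.cons_val_zero, Matrix.cons_val_one,
      Matrix.cons_val, ne_eq, OfNat.ofNat_ne_zero, not_false_eq_true, zero_pow, add_zero]
    linear_combination
      (mL L * Real.exp (2 * L * t + L) / (2 * Real.pi) ^ 3) ^ 2 * Real.sin_sq_add_cos_sq z
  simp only [hsq, intervalIntegral.integral_const, sub_neg_eq_add, smul_eq_mul]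
  field_simp
  ring

theorem sqrt_setIntegral_sum_sq_v0 {L : ℝ} (hL : 0 ≤ L) (t : ℝ) :
    Real.sqrt (∫ x in cube, ∑ i, v0 L t x i ^ 2) = mL L * Real.sqrt (M0 L t) / Real.sqrt 2 := by
  rw [setIntegral_sum_sq_v0, Real.sqrt_div' _ (by norm_num : (0 : ℝ) ≤ 2),
    Real.sqrt_sq (by have := mL_nonneg hL; positivity), sqrt_M0]

theorem sqrt_setIntegral_sum_sq_Xi0 {L : ℝ} (hL : 0 ≤ L) (t : ℝ) :
    Real.sqrt (∫ x in cube, ∑ i, Xi0 L t x i ^ 2) =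
      mL L * Real.sqrt (M0 L t) / (2 * Real.pi) ^ ((3 : ℝ) / 2) := by
  rw [setIntegral_sum_sq_Xi0, Real.sqrt_div' _ (by positivity),
    Real.sqrt_sq (by have := mL_nonneg hL; positivity), sqrt_M0, sqrt_two_pi_pow_three]

theorem divMat_Mv : divMat (fun y => Mv L t y) x i = (2 * L + 1 / 2) * v0 L t x i := by
  refine (divMat_comp_apply (fun z => Mv L t fun _ => z) x 2 i).trans ?_
  fin_cases i <;> simp [Mv, v0, mul_comm, mul_left_comm, mul_assoc, div_eq_mul_inv]

theorem divMat_MXi : divMat (fun y => MXi L t y) x i = (2 * L + 1 / 2) * Xi0 L t x i := by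
  refine (divMat_comp_apply (fun z => MXi L t fun _ => z) x 2 i).trans ?_
  fin_cases i <;> simp [MXi, Xi0, mul_comm, mul_left_comm, mul_assoc, div_eq_mul_inv]

theorem Mv_transpose : (Mv L t x)ᵀ = Mv L t x := by
  ext i j
  fin_cases i <;> fin_cases j <;> simp [Mv]

theorem Mv_trace : Matrix.trace (Mv L t x) = 0 := by
  simp [Mv, Matrix.trace, Fin.sum_univ_three]

theorem MXi_transpose : (MXi L t x)ᵀ = -MXi L t x := by
  ext i j
  fin_cases i <;> fin_cases j <;> simp [MXi]

theorem divMat_quadratic_v0_Xi0 (c₁ c₂ : ℝ) :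
    divMat (fun y => c₁ • outer (v0 L t y) (v0 L t y) - c₂ • outer (Xi0 L t y) (Xi0 L t y)) x i
      = 0 :=
  divMat_comp_apply_eq_zero
    (fun z => c₁ • outer (v0 L t fun _ => z) (v0 L t fun _ => z) -
      c₂ • outer (Xi0 L t fun _ => z) (Xi0 L t fun _ => z)) 2
    (fun z i => by simp [outer, v0, Xi0]) x i

theorem divMat_commutator_v0_Xi0 :
    divMat (fun y => outer (v0 L t y) (Xi0 L t y) - outer (Xi0 L t y) (v0 L t y)) x i = 0 :=
  divMat_comp_apply_eq_zero
    (fun z => outer (v0 L t fun _ => z) (Xi0 L t fun _ => z) -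
      outer (Xi0 L t fun _ => z) (v0 L t fun _ => z)) 2
    (fun z i => by simp [outer, v0, Xi0]) x i

end InitialData

/-- **Proposition 5.6 (explicit start of the iteration, multiplicative-noise case).**
(i) `v₀(t,·)` and `Ξ₀(t,·)` are divergence-free and mean-zero with
`‖v₀(t,·)‖_{L²} = m_L M₀(t)^{1/2}/√2` and `‖Ξ₀(t,·)‖_{L²} = m_L M₀(t)^{1/2}/(2π)^{3/2}`;
(ii) `M_v` is symmetric and trace-free and `M_Ξ` is skew-symmetric;
(iii) for any `Υ₁, Υ₂ : ℝ → ℝ` with `Υ₁` nowhere zero,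
`∂_t v₀ + (1/2)v₀ + div(Υ₁·(v₀ ⊗ v₀) − Υ₁⁻¹Υ₂²·(Ξ₀ ⊗ Ξ₀)) = div M_v` and
`∂_t Ξ₀ + (1/2)Ξ₀ + Υ₁·div(v₀ ⊗ Ξ₀ − Ξ₀ ⊗ v₀) = div M_Ξ` everywhere. -/
theorem prop56_start_of_iteration (L : ℝ) (hL : 0 < L) :
    ((∀ (t : ℝ) (x : Fin 3 → ℝ),
        (∑ i, fderiv ℝ (fun y => v0 L t y i) x (Pi.single i 1)) = 0 ∧
        (∑ i, fderiv ℝ (fun y => Xi0 L t y i) x (Pi.single i 1)) = 0) ∧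
      (∀ (t : ℝ) (i : Fin 3),
        (∫ x in cube, v0 L t x i) = 0 ∧ (∫ x in cube, Xi0 L t x i) = 0) ∧
      (∀ t : ℝ,
        Real.sqrt (∫ x in cube, ∑ i, (v0 L t x i) ^ 2) =
          mL L * Real.sqrt (M0 L t) / Real.sqrt 2 ∧
        Real.sqrt (∫ x in cube, ∑ i, (Xi0 L t x i) ^ 2) =
          mL L * Real.sqrt (M0 L t) / (2 * Real.pi) ^ ((3 : ℝ) / 2))) ∧
    (∀ (t : ℝ) (x : Fin 3 → ℝ),
      (Mv L t x)ᵀ = Mv L t x ∧ Matrix.trace (Mv L t x) = 0 ∧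
      (MXi L t x)ᵀ = -(MXi L t x)) ∧
    (∀ Υ₁ Υ₂ : ℝ → ℝ, (∀ t, Υ₁ t ≠ 0) →
      (∀ (t : ℝ) (x : Fin 3 → ℝ) (i : Fin 3),
        deriv (fun s => v0 L s x i) t + (1 / 2) * v0 L t x i +
          divMat (fun y => Υ₁ t • outer (v0 L t y) (v0 L t y) -
            ((Υ₁ t)⁻¹ * (Υ₂ t) ^ 2) • outer (Xi0 L t y) (Xi0 L t y)) x i =
        divMat (fun y => Mv L t y) x i) ∧
      (∀ (t : ℝ) (x : Fin 3 → ℝ) (i : Fin 3),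
        deriv (fun s => Xi0 L s x i) t + (1 / 2) * Xi0 L t x i +
          Υ₁ t * divMat (fun y => outer (v0 L t y) (Xi0 L t y) -
            outer (Xi0 L t y) (v0 L t y)) x i =
        divMat (fun y => MXi L t y) x i)) := by
  refine ⟨⟨fun t x => ⟨sum_fderiv_v0 L t x, sum_fderiv_Xi0 L t x⟩,
      fun t i => ⟨setIntegral_v0 L t i, setIntegral_Xi0 L t i⟩,
      fun t => ⟨sqrt_setIntegral_sum_sq_v0 hL.le t, sqrt_setIntegral_sum_sq_Xi0 hL.le t⟩⟩,
    fun t x => ⟨Mv_transpose L t x, Mv_trace L t x, MXi_transpose L t x⟩,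
    fun Υ₁ Υ₂ _ => ⟨fun t x i => ?_, fun t x i => ?_⟩⟩
  · rw [deriv_v0, divMat_quadratic_v0_Xi0, divMat_Mv]
    ring
  · rw [deriv_Xi0, divMat_commutator_v0_Xi0, divMat_MXi]
    ring
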